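/- arXiv:2102.08446 — 3 statements merged into one kernel-verified Lean document; each statement's English description precedes it below -/
import Mathlib

section
/- Let n ∈ ℕ, let p be the distribution on ℝⁿ that with probability 1/2 samples a uniform point of the closed unit Euclidean ball and with probability 1/2 samples one of the 2n signed standard basis vectors ±e_i uniformly. Fix d ∈ ℝⁿ, λ > 0, and set Φ = E_{W∼p}[cosh(λ d^⊤ W)]. Let X be drawn from any σ-smooth distribution on the closed unit ball (a distribution assigning every measurable set A probability at most U(A)/σ, U being the uniform measure on the ball). Then for every k ∈ ℕ and δ ∈ (0,1): Pr[ λ d^⊤ X ≥ ln(4kΦ/δ) ] ≤ (1−σ)^k + δ. -/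
/-! Since `exp t ≤ 2 cosh t`, Markov's inequality for `cosh (λ d^⊤ W)` under `p` bounds the
`p`-mass of the tail event `E = {λ d^⊤ x ≥ ln (4kΦ/δ)}` by `δ/(2k)`. Half of `p` is uniform on the
ball, so `U(E) ≤ 2 p(E)`, and `σ`-smoothness gives `Pr[X ∈ E] ≤ δ/(kσ)`. Together with the trivial
bound `1`, Bernoulli's inequality `(1 - σ)^k ≥ 1 - kσ` turns `min 1 (δ/(kσ))` into
`(1 - σ)^k + δ`. -/

open MeasureTheory
open scoped ENNReal

/-- The closed unit Euclidean ball of `ℝⁿ`. -/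
def ballSet (n : ℕ) : Set (Fin n → ℝ) := {x | ∑ i, x i ^ 2 ≤ 1}

/-- The uniform (normalized Lebesgue) probability measure on the closed unit Euclidean ball. -/
noncomputable def unifBall (n : ℕ) : Measure (Fin n → ℝ) :=
  (volume (ballSet n))⁻¹ • volume.restrict (ballSet n)

/-- The distribution on `ℝⁿ` that with probability `1/2` samples a uniform point of the closed
unit Euclidean ball and with probability `1/2` samples a uniformly random signed standard basis
vector from `{±e_1, …, ±e_n}`. -/
noncomputable def pMix (n : ℕ) : Measure (Fin n → ℝ) :=
  (2 : ℝ≥0∞)⁻¹ • unifBall n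
    + (4 * (n : ℝ≥0∞))⁻¹ • ∑ i : Fin n,
        (Measure.dirac (Pi.single i 1) + Measure.dirac (-(Pi.single i (1 : ℝ))))

lemma isCompact_ballSet (n : ℕ) : IsCompact (ballSet n) := by
  refine Metric.isCompact_of_isClosed_isBounded (isClosed_le (by fun_prop) continuous_const)
    ((Metric.isBounded_closedBall (x := 0) (r := 1)).subset fun x hx => ?_)
  rw [Metric.mem_closedBall, dist_zero_right, pi_norm_le_iff_of_nonneg zero_le_one]
  intro i
  rw [Real.norm_eq_abs, ← sq_le_one_iff_abs_le_one]
  exact (Finset.single_le_sum (fun j _ => sq_nonneg (x j)) (Finset.mem_univ i)).trans hx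

lemma volume_ballSet_ne_zero (n : ℕ) : volume (ballSet n) ≠ 0 := by
  have hopen : IsOpen {x : Fin n → ℝ | ∑ i, x i ^ 2 < 1} := isOpen_lt (by fun_prop) continuous_const
  exact ((hopen.measure_pos volume ⟨0, by simp⟩).trans_le
    (measure_mono fun _ hx => le_of_lt (α := ℝ) hx)).ne'

instance unifBall.isProbabilityMeasure (n : ℕ) : IsProbabilityMeasure (unifBall n) :=
  ⟨by simp [unifBall, ENNReal.inv_mul_cancel (volume_ballSet_ne_zero n)
    (isCompact_ballSet n).measure_lt_top.ne]⟩

lemma isProbabilityMeasure_pMix {n : ℕ} (hn : 0 < n) : IsProbabilityMeasure (pMix n) := by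
  constructor
  have hn0 : (n : ℝ≥0∞) ≠ 0 := by exact_mod_cast hn.ne'
  simp only [pMix, Measure.coe_add, Measure.coe_smul, Measure.coe_finsetSum, Pi.add_apply,
    Pi.smul_apply, measure_univ, smul_eq_mul, mul_one, Finset.sum_apply, Finset.sum_const,
    Finset.card_univ, Fintype.card_fin, smul_add, nsmul_eq_mul]
  rw [← two_mul, show (4 : ℝ≥0∞) * n = 2 * (2 * n) by ring, ENNReal.mul_inv (by simp) (by simp),
    mul_assoc, ENNReal.inv_mul_cancel (by simp [hn0]) (by simp [ENNReal.mul_eq_top]), mul_one,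
    ENNReal.inv_two_add_inv_two]

lemma unifBall_le_two_mul_pMix (n : ℕ) (A : Set (Fin n → ℝ)) :
    unifBall n A ≤ 2 * pMix n A := by
  simp only [pMix, Measure.add_apply, Measure.smul_apply, smul_eq_mul, mul_add,
    ← mul_assoc, ENNReal.mul_inv_cancel two_ne_zero ENNReal.ofNat_ne_top, one_mul]
  exact le_self_add

lemma Continuous.integrable_unifBall {n : ℕ} {f : (Fin n → ℝ) → ℝ} (hf : Continuous f) :
    Integrable f (unifBall n) :=
  (hf.continuousOn.integrableOn_compact (isCompact_ballSet n)).smul_measure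
    (ENNReal.inv_ne_top.mpr (volume_ballSet_ne_zero n))

lemma Continuous.integrable_pMix {n : ℕ} (hn : 0 < n) {f : (Fin n → ℝ) → ℝ}
    (hf : Continuous f) : Integrable f (pMix n) := by
  have hdirac (a : Fin n → ℝ) : Integrable f (Measure.dirac a) :=
    integrable_dirac enorm_lt_top
  refine (hf.integrable_unifBall.smul_measure (by simp)).add_measure
    ((integrable_finsetSum_measure.mpr fun i _ => (hdirac _).add_measure (hdirac _)).smul_measure
      ?_)
  simpa using hn.ne'

lemma measure_log_mul_integral_cosh_le {Ω : Type*} [MeasurableSpace Ω] (ν : Measure Ω)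
    [IsFiniteMeasure ν] [NeZero ν] {g : Ω → ℝ} (hg : Integrable (fun x => Real.cosh (g x)) ν)
    {c : ℝ} (hc : 0 < c) :
    ν {x | Real.log (c * ∫ w, Real.cosh (g w) ∂ν) ≤ g x} ≤ ENNReal.ofReal (2 / c) := by
  set Φ := ∫ w, Real.cosh (g w) ∂ν
  have hΦ : 0 < Φ := by
    refine (measureReal_univ_pos (μ := ν)).trans_le ?_
    simpa using integral_mono (integrable_const 1) hg fun x => Real.one_le_cosh (g x)
  have hsub : {x | Real.log (c * Φ) ≤ g x} ⊆ {x | c * Φ / 2 ≤ Real.cosh (g x)} := by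
    intro x hx
    have hexp : c * Φ ≤ Real.exp (g x) := (Real.log_le_iff_le_exp (by positivity)).mp hx
    have := Real.exp_pos (-g x)
    show c * Φ / 2 ≤ Real.cosh (g x)
    rw [Real.cosh_eq]
    linarith
  have hmarkov := mul_meas_ge_le_integral_of_nonneg
    (ae_of_all _ fun x => (Real.cosh_pos (g x)).le) hg (c * Φ / 2)
  calc ν {x | Real.log (c * Φ) ≤ g x} ≤ ν {x | c * Φ / 2 ≤ Real.cosh (g x)} := measure_mono hsub
    _ = ENNReal.ofReal (ν.real {x | c * Φ / 2 ≤ Real.cosh (g x)}) := (ofReal_measureReal).symm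
    _ ≤ ENNReal.ofReal (2 / c) := by
      gcongr
      rw [le_div_iff₀ hc]
      nlinarith

lemma min_one_div_le_one_sub_pow_add {σ δ : ℝ} (hσ0 : 0 < σ) (hσ1 : σ ≤ 1) (hδ : 0 ≤ δ)
    {k : ℕ} (hk : 0 < k) : min 1 (δ / (k * σ)) ≤ (1 - σ) ^ k + δ := by
  have hkσ : 0 < (k : ℝ) * σ := by positivity
  have hbernoulli : 1 - k * σ ≤ (1 - σ) ^ k := by
    simpa [sub_eq_add_neg] using one_add_mul_le_pow (a := -σ) (by linarith) k
  have hpow : 0 ≤ (1 - σ) ^ k := pow_nonneg (by linarith) k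
  rcases le_total δ (k * σ) with hδkσ | hkσδ
  · refine min_le_of_right_le ((div_le_iff₀ hkσ).mpr ?_)
    rcases le_total ((k : ℝ) * σ) 1 with h | h <;> nlinarith
  · exact min_le_of_left_le (by linarith)

theorem smooth_correlation_tail_bound_general
    (n : ℕ) (hn : 0 < n) (σ : ℝ) (hσ0 : 0 < σ) (hσ1 : σ ≤ 1)
    (d : Fin n → ℝ) (lam : ℝ) (k : ℕ) (δ : ℝ) (hδ0 : 0 < δ)
    (μ : Measure (Fin n → ℝ)) [IsProbabilityMeasure μ]
    (hsmooth : ∀ A : Set (Fin n → ℝ), MeasurableSet A → μ A ≤ unifBall n A / ENNReal.ofReal σ) :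
    μ {x | Real.log (4 * k * (∫ w, Real.cosh (lam * ∑ i, d i * w i) ∂(pMix n)) / δ)
          ≤ lam * ∑ i, d i * x i}
      ≤ ENNReal.ofReal ((1 - σ) ^ k + δ) := by
  rcases Nat.eq_zero_or_pos k with rfl | hk
  · exact prob_le_one.trans (ENNReal.one_le_ofReal.mpr (by simp [hδ0.le]))
  have := isProbabilityMeasure_pMix hn
  have hcont : Continuous fun w : Fin n → ℝ => lam * ∑ i, d i * w i := by fun_prop
  set Φ := ∫ w, Real.cosh (lam * ∑ i, d i * w i) ∂(pMix n)
  set E := {x : Fin n → ℝ | Real.log (4 * k * Φ / δ) ≤ lam * ∑ i, d i * x i}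
  have hpE : pMix n E ≤ ENNReal.ofReal (δ / (2 * k)) := by
    convert measure_log_mul_integral_cosh_le (pMix n)
      ((Real.continuous_cosh.comp hcont).integrable_pMix hn) (c := 4 * k / δ) (by positivity)
      using 2
    · simp only [E, Φ, mul_div_right_comm]
    · field_simp
      norm_num
  have hμE : μ E ≤ ENNReal.ofReal (δ / (k * σ)) := calc
    μ E ≤ unifBall n E / ENNReal.ofReal σ :=
        hsmooth E (measurableSet_le measurable_const hcont.measurable)
    _ ≤ 2 * pMix n E / ENNReal.ofReal σ := by gcongr; exact unifBall_le_two_mul_pMix n E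
    _ ≤ 2 * ENNReal.ofReal (δ / (2 * k)) / ENNReal.ofReal σ := by gcongr
    _ = ENNReal.ofReal (δ / (k * σ)) := by
      rw [← ENNReal.ofReal_ofNat, ← ENNReal.ofReal_mul zero_le_two,
        ← ENNReal.ofReal_div_of_pos hσ0]
      congr 1
      field_simp
  calc μ E ≤ ENNReal.ofReal (min 1 (δ / (k * σ))) := by
        simpa using le_min prob_le_one hμE
    _ ≤ ENNReal.ofReal ((1 - σ) ^ k + δ) :=
        ENNReal.ofReal_le_ofReal (min_one_div_le_one_sub_pow_add hσ0 hσ1 hδ0.le hk)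

/-- tail bound for the correlation of a smooth vector with a fixed direction.
With `Φ = E_{W∼p}[cosh(λ d^⊤ W)]` and `X` drawn from any `σ`-smooth distribution on the closed
unit ball: `Pr[λ d^⊤ X ≥ ln(4kΦ/δ)] ≤ (1−σ)^k + δ`. -/
theorem smooth_correlation_tail_bound
    (n : ℕ) (hn : 0 < n) (σ : ℝ) (hσ0 : 0 < σ) (hσ1 : σ ≤ 1)
    (d : Fin n → ℝ) (lam : ℝ) (hlam : 0 < lam) (k : ℕ) (δ : ℝ) (hδ0 : 0 < δ) (hδ1 : δ < 1)
    (μ : Measure (Fin n → ℝ)) [IsProbabilityMeasure μ]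
    (hsmooth : ∀ A : Set (Fin n → ℝ), MeasurableSet A → μ A ≤ unifBall n A / ENNReal.ofReal σ) :
    μ {x | Real.log (4 * k * (∫ w, Real.cosh (lam * ∑ i, d i * w i) ∂(pMix n)) / δ)
          ≤ lam * ∑ i, d i * x i}
      ≤ ENNReal.ofReal ((1 - σ) ^ k + δ) :=
  smooth_correlation_tail_bound_general n hn σ hσ0 hσ1 d lam k δ hδ0 μ hsmooth
end

section
/- Let σ ∈ (0,1], T, ℓ ∈ ℕ, w > 0, δ ∈ (0,1), and let J denote the set of all subintervals of [0,1] of width at most w. Let (d_{i,j})_{i∈[T], j∈[ℓ]} be random points in [0,1] generated by a Tℓ-step adaptive sequence of σ-smooth distributions (each conditional distribution, given all previously realized points, has density at most 1/σ with respect to Lebesgue measure on [0,1]). Then with probability at least 1 − δ: max_{J∈J} Σ_{i∈[T], j∈[ℓ]} 1[d_{i,j} ∈ J] < (Tℓw/σ)·ln(2Tℓ/δ) + 10·√( (Tℓw/σ)·ln(2Tℓ/δ)·ln(1/δ) ) + 10·log( 10·Tℓ·log(2Tℓ/δ) / (σδ) ). -/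
open MeasureTheory ProbabilityTheory
open scoped ENNReal

/-- The law of an adaptive process on `ℝ` driven by the Markov kernels `D t`. -/
noncomputable def adaptLaw (D : (s : ℕ) → Kernel (Fin s → ℝ) ℝ) :
    (m : ℕ) → Measure (Fin m → ℝ)
  | 0 => Measure.dirac (fun i => i.elim0)
  | (m + 1) => (adaptLaw D m).bind fun h => ((D m) h).map (Fin.snoc h)

/-!
For each index `m`, count the later points that land within `w` of the `m`-th point. Given the
past, a `σ`-smooth point lands in a fixed interval of length `2w` with probability at most
`2w/σ`, so the moment generating function of this count is dominated by that of a binomial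
variable. A Chernoff bound at `λ = 1/4` and a union bound over `m` show that, with probability at
least `1 - δ`, all these counts stay below `K = (11/4)·nw/σ + 4·log(n/δ)`, where `n = Tℓ`. An
interval of width at most `w` contains at most one point more than the count of its first point,
and `K + 1` is below the stated bound.
-/

open Finset Real

def IsSmooth (σ : ℝ) (ν : Measure ℝ) : Prop :=
  ∀ A, MeasurableSet A → ν A ≤ ENNReal.ofReal (1 / σ) * volume (A ∩ Set.Icc 0 1)

variable {D : (s : ℕ) → Kernel (Fin s → ℝ) ℝ}

@[fun_prop]
lemma measurable_snoc_pair (m : ℕ) :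
    Measurable fun p : (Fin m → ℝ) × ℝ => (Fin.snoc p.1 p.2 : Fin (m + 1) → ℝ) := by
  refine measurable_pi_iff.2 fun i => Fin.lastCases ?_ (fun j => ?_) i
  · simpa only [Fin.snoc_last] using measurable_snd
  · simp only [Fin.snoc_castSucc]
    fun_prop

lemma adaptLaw_succ (m : ℕ) [SFinite (adaptLaw D m)] [IsSFiniteKernel (D m)] :
    adaptLaw D (m + 1) = (adaptLaw D m ⊗ₘ D m).map fun p => Fin.snoc p.1 p.2 := by
  rw [adaptLaw, Measure.compProd_eq_comp_prod, Measure.map_comp _ _ (measurable_snoc_pair m)]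
  congr 1
  funext h
  rw [Kernel.map_apply _ (measurable_snoc_pair m), Kernel.prod_apply, Kernel.id_apply,
    Measure.dirac_prod, Measure.map_map (measurable_snoc_pair m) measurable_prodMk_left]
  rfl

instance [∀ s, IsMarkovKernel (D s)] (m : ℕ) : IsProbabilityMeasure (adaptLaw D m) := by
  induction m with
  | zero => rw [adaptLaw]; infer_instance
  | succ m ih => rw [adaptLaw_succ]; exact Measure.isProbabilityMeasure_map (by fun_prop)

lemma lintegral_adaptLaw_succ [∀ s, IsMarkovKernel (D s)] (m : ℕ)
    {f : (Fin (m + 1) → ℝ) → ℝ≥0∞} (hf : Measurable f) :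
    ∫⁻ h, f h ∂adaptLaw D (m + 1) = ∫⁻ h, ∫⁻ x, f (Fin.snoc h x) ∂D m h ∂adaptLaw D m := by
  rw [adaptLaw_succ, lintegral_map hf (by fun_prop)]
  exact Measure.lintegral_compProd (f := fun p => f (Fin.snoc p.1 p.2)) (by fun_prop)

open Classical in
noncomputable def hitCount (E : (s : ℕ) → Set ((Fin s → ℝ) × ℝ)) {r : ℕ} (h : Fin r → ℝ) : ℕ :=
  #{s : Fin r | (Fin.take s s.isLt.le h, h s) ∈ E s}

section hitCount

open Classical

variable {E : (s : ℕ) → Set ((Fin s → ℝ) × ℝ)}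

lemma hitCount_snoc {r : ℕ} (h : Fin r → ℝ) (x : ℝ) :
    hitCount E (Fin.snoc h x : Fin (r + 1) → ℝ)
      = hitCount E h + if (h, x) ∈ E r then 1 else 0 := by
  have htake (i : Fin r) : Fin.take i (Fin.castSucc i).isLt.le (Fin.snoc h x : Fin (r + 1) → ℝ)
      = Fin.take i i.isLt.le h := by
    funext j
    simp [Fin.take_apply, Fin.snoc, show (j : ℕ) < r by omega]
    rfl
  have hlast : Fin.take r (Fin.last r).isLt.le (Fin.snoc h x : Fin (r + 1) → ℝ) = h := by
    funext j
    simp [Fin.take_apply, Fin.snoc]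
    rfl
  simp only [hitCount, card_filter, Fin.sum_univ_castSucc, Fin.snoc_castSucc, Fin.snoc_last,
    Fin.val_castSucc, Fin.val_last, htake, hlast]

lemma measurable_hitCount (hE : ∀ s, MeasurableSet (E s)) (r : ℕ) :
    Measurable (hitCount E : (Fin r → ℝ) → ℕ) := by
  unfold hitCount
  simp_rw [card_filter]
  refine Finset.measurable_sum _ fun s _ => Measurable.ite ?_ measurable_const measurable_const
  exact (hE s).preimage ((measurable_pi_lambda _ fun i => measurable_pi_apply _).prodMk
    (measurable_pi_apply s))

lemma lintegral_pow_ite_mem_le (ν : Measure ℝ) [IsProbabilityMeasure ν] {S : Set ℝ}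
    (hS : MeasurableSet S) (c : ℝ≥0∞) :
    ∫⁻ x, c ^ (if x ∈ S then 1 else 0) ∂ν ≤ 1 + (c - 1) * ν S := by
  calc ∫⁻ x, c ^ (if x ∈ S then 1 else 0) ∂ν
      ≤ ∫⁻ x, 1 + S.indicator (fun _ => c - 1) x ∂ν := by
        refine lintegral_mono fun x => ?_
        by_cases hx : x ∈ S
        · simpa [hx] using le_add_tsub
        · simp [hx]
    _ = 1 + (c - 1) * ν S := by
        rw [lintegral_add_left measurable_const, lintegral_indicator_const hS,
          lintegral_const, measure_univ, one_mul]

lemma lintegral_pow_hitCount_le [∀ s, IsMarkovKernel (D s)] (hE : ∀ s, MeasurableSet (E s))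
    {p : ℝ≥0∞} (hp : ∀ s g, D s g (Prod.mk g ⁻¹' E s) ≤ p) (c : ℝ≥0∞) (r : ℕ) :
    ∫⁻ h, c ^ hitCount E h ∂adaptLaw D r ≤ (1 + (c - 1) * p) ^ r := by
  induction r with
  | zero => simp [adaptLaw, hitCount]
  | succ r ih =>
    calc ∫⁻ h, c ^ hitCount E h ∂adaptLaw D (r + 1)
        = ∫⁻ h, c ^ hitCount E h * ∫⁻ x, c ^ (if x ∈ Prod.mk h ⁻¹' E r then 1 else 0) ∂D r h
            ∂adaptLaw D r := by
          rw [lintegral_adaptLaw_succ r ((measurable_hitCount hE _).const_pow c)]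
          refine lintegral_congr fun h => ?_
          simp only [hitCount_snoc, pow_add, Set.mem_preimage]
          exact lintegral_const_mul _ ((Measurable.ite (measurable_prodMk_left (hE r))
            measurable_const measurable_const).const_pow c)
      _ ≤ ∫⁻ h, c ^ hitCount E h * (1 + (c - 1) * p) ∂adaptLaw D r := by
          refine lintegral_mono fun h => ?_
          gcongr
          exact (lintegral_pow_ite_mem_le _ (measurable_prodMk_left (hE r)) c).trans
            (by gcongr; exact hp r h)
      _ ≤ (1 + (c - 1) * p) ^ (r + 1) := by
          rw [lintegral_mul_const _ ((measurable_hitCount hE r).const_pow c), pow_succ]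
          gcongr

lemma adaptLaw_hitCount_ge_le_exp [∀ s, IsMarkovKernel (D s)] (hE : ∀ s, MeasurableSet (E s))
    {p : ℝ} (hp0 : 0 ≤ p) (hp : ∀ s g, D s g (Prod.mk g ⁻¹' E s) ≤ ENNReal.ofReal p)
    {t : ℝ} (ht : 0 ≤ t) (r : ℕ) (K : ℝ) :
    adaptLaw D r {h | K ≤ hitCount E h}
      ≤ ENNReal.ofReal (exp (r * p * (exp t - 1) - t * K)) := by
  have het : 0 ≤ exp t - 1 := by linarith [add_one_le_exp t]
  set c := ENNReal.ofReal (exp t)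
  have hc (n : ℕ) : c ^ n = ENNReal.ofReal (exp (t * n)) := by
    rw [← ENNReal.ofReal_pow (exp_nonneg t), ← exp_nat_mul, mul_comm]
  have hgrowth : 1 + (c - 1) * ENNReal.ofReal p = ENNReal.ofReal (1 + (exp t - 1) * p) := by
    rw [← ENNReal.ofReal_one, ← ENNReal.ofReal_sub _ zero_le_one, ← ENNReal.ofReal_mul het,
      ← ENNReal.ofReal_add zero_le_one (by positivity)]
  calc adaptLaw D r {h | K ≤ hitCount E h}
      ≤ adaptLaw D r {h | ENNReal.ofReal (exp (t * K)) ≤ c ^ hitCount E h} := by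
        refine measure_mono fun h (hh : K ≤ _) => ?_
        change _ ≤ c ^ _
        rw [hc]
        gcongr
    _ ≤ (∫⁻ h, c ^ hitCount E h ∂adaptLaw D r) / ENNReal.ofReal (exp (t * K)) :=
        meas_ge_le_lintegral_div ((measurable_hitCount hE r).const_pow c).aemeasurable
          (by positivity) ENNReal.ofReal_ne_top
    _ ≤ ENNReal.ofReal ((1 + (exp t - 1) * p) ^ r / exp (t * K)) := by
        rw [ENNReal.ofReal_div_of_pos (exp_pos _), ENNReal.ofReal_pow (by positivity), ← hgrowth]
        gcongr
        exact lintegral_pow_hitCount_le hE hp c r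
    _ ≤ ENNReal.ofReal (exp (r * ((exp t - 1) * p)) / exp (t * K)) := by
        gcongr
        rw [exp_nat_mul]
        exact pow_le_pow_left₀ (by positivity) (by linarith [add_one_le_exp ((exp t - 1) * p)]) r
    _ = ENNReal.ofReal (exp (r * p * (exp t - 1) - t * K)) := by
        rw [exp_sub]
        ring_nf

end hitCount

lemma IsSmooth.measure_closedBall_le {ν : Measure ℝ} {σ : ℝ} (hν : IsSmooth σ ν) (hσ : 0 ≤ σ)
    (x w : ℝ) : ν (Metric.closedBall x w) ≤ ENNReal.ofReal (2 * w / σ) :=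
  calc ν (Metric.closedBall x w)
      ≤ ENNReal.ofReal (1 / σ) * volume (Metric.closedBall x w) :=
        (hν _ measurableSet_closedBall).trans (by gcongr; exact Set.inter_subset_left)
    _ = ENNReal.ofReal (2 * w / σ) := by
        rw [Real.volume_closedBall, ← ENNReal.ofReal_mul (by positivity)]
        ring_nf

def nearCoord (w : ℝ) (m s : ℕ) : Set ((Fin s → ℝ) × ℝ) :=
  {p | ∃ hm : m < s, dist p.2 (p.1 ⟨m, hm⟩) ≤ w}

section nearCoord

variable {w : ℝ}

lemma measurableSet_nearCoord (m s : ℕ) : MeasurableSet (nearCoord w m s) := by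
  by_cases hm : m < s
  · have : nearCoord w m s = {p | dist p.2 (p.1 ⟨m, hm⟩) ≤ w} := by simp [nearCoord, hm]
    rw [this]
    exact measurableSet_le (by fun_prop) measurable_const
  · simp [nearCoord, hm]

lemma IsSmooth.measure_preimage_nearCoord_le {ν : Measure ℝ} {σ : ℝ} (hν : IsSmooth σ ν)
    (hσ : 0 ≤ σ) (m s : ℕ) (g : Fin s → ℝ) :
    ν (Prod.mk g ⁻¹' nearCoord w m s) ≤ ENNReal.ofReal (2 * w / σ) := by
  by_cases hm : m < s
  · exact (measure_mono (t := Metric.closedBall (g ⟨m, hm⟩) w)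
      fun x (⟨_, hx⟩ : ∃ _, _) => hx).trans
      (hν.measure_closedBall_le hσ _ w)
  · simp [nearCoord, hm]

open Classical in
lemma hitCount_nearCoord {r : ℕ} (h : Fin r → ℝ) (m : Fin r) :
    hitCount (nearCoord w m) h = #{s | m < s ∧ dist (h s) (h m) ≤ w} := by
  unfold hitCount
  congr 1
  ext s
  simp [nearCoord, Fin.take_apply]

lemma card_filter_mem_Icc_le {r : ℕ} (h : Fin r → ℝ) {a b : ℝ} (hw : b - a ≤ w) {K : ℕ}
    (hK : ∀ m : Fin r, hitCount (nearCoord w m) h < K) : #{s | h s ∈ Set.Icc a b} ≤ K := by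
  classical
  rcases (univ.filter fun s => h s ∈ Set.Icc a b).eq_empty_or_nonempty with he | hne
  · rw [he, card_empty]
    exact Nat.zero_le K
  set m := (univ.filter fun s => h s ∈ Set.Icc a b).min' hne
  have hm : h m ∈ Set.Icc a b := (mem_filter.1 (min'_mem _ hne)).2
  calc #{s | h s ∈ Set.Icc a b}
        ≤ #(insert m (univ.filter fun s => m < s ∧ dist (h s) (h m) ≤ w)) := by
        refine card_le_card fun s hs => ?_
        rcases eq_or_ne s m with rfl | hsm
        · exact mem_insert_self _ _
        refine mem_insert_of_mem (mem_filter.2 ⟨mem_univ _, ?_, ?_⟩)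
        · exact lt_of_le_of_ne (min'_le _ s hs) hsm.symm
        · exact (Real.dist_le_of_mem_Icc (mem_filter.1 hs).2 hm).trans hw
    _ ≤ hitCount (nearCoord w m) h + 1 := by
        rw [hitCount_nearCoord]
        exact card_insert_le _ _
    _ ≤ K := hK m

end nearCoord

noncomputable def nearCountThreshold (n w σ δ : ℝ) : ℝ :=
  11 / 8 * (n * (2 * w / σ)) + 4 * log (n / δ)

lemma nearCountThreshold_nonneg {n w σ δ : ℝ} (hn : 1 ≤ n) (hw : 0 ≤ w) (hσ : 0 ≤ σ)
    (hδ0 : 0 < δ) (hδ1 : δ < 1) : 0 ≤ nearCountThreshold n w σ δ := by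
  have : 0 ≤ log (n / δ) := log_nonneg ((one_le_div hδ0).2 (hδ1.le.trans hn))
  unfold nearCountThreshold
  positivity

-- `exp (1/4) ≤ 1 + 1/4 + 1/16`, and the factor `11/8` leaves room for the excess `1/16`.
lemma chernoff_exponent_le {μ : ℝ} (hμ : 0 ≤ μ) (L : ℝ) :
    μ * (exp (1 / 4) - 1) - 1 / 4 * (11 / 8 * μ + 4 * L) ≤ -L := by
  have hexp := (abs_le.1 (abs_exp_sub_one_sub_id_le (x := 1 / 4) (by norm_num [abs_of_pos]))).2
  nlinarith

lemma adaptLaw_iUnion_nearCountThreshold_le [∀ s, IsMarkovKernel (D s)] {σ w δ : ℝ}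
    (hσ : 0 < σ) (hw : 0 ≤ w) (hδ : 0 < δ)
    (hsmooth : ∀ s g, IsSmooth σ (D s g)) {N : ℕ} (hN : 0 < N) :
    adaptLaw D N (⋃ m : Fin N,
      {h | nearCountThreshold N w σ δ ≤ hitCount (nearCoord w m) h}) ≤ ENNReal.ofReal δ :=
  calc adaptLaw D N (⋃ m : Fin N, {h | nearCountThreshold N w σ δ ≤ hitCount (nearCoord w m) h})
      ≤ ∑ m : Fin N, adaptLaw D N {h | nearCountThreshold N w σ δ ≤ hitCount (nearCoord w m) h} :=
        measure_iUnion_fintype_le _ _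
    _ ≤ ∑ m : Fin N, ENNReal.ofReal (δ / N) := by
        gcongr with m
        refine (adaptLaw_hitCount_ge_le_exp (measurableSet_nearCoord m) (by positivity)
          (fun s g => (hsmooth s g).measure_preimage_nearCoord_le hσ.le m s g)
          (t := 1 / 4) (by norm_num) N _).trans ?_
        gcongr
        refine (exp_le_exp.2 (chernoff_exponent_le (by positivity) _)).trans_eq ?_
        rw [exp_neg, exp_log (by positivity), inv_div]
    _ = ENNReal.ofReal δ := by
        rw [sum_const, card_univ, Fintype.card_fin, nsmul_eq_mul, ← ENNReal.ofReal_natCast,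
          ← ENNReal.ofReal_mul (by positivity), mul_div_cancel₀ _ (by positivity)]

lemma one_add_log_div_le {n σ δ : ℝ} (hn : 1 ≤ n) (hσ0 : 0 < σ) (hσ1 : σ ≤ 1) (hδ0 : 0 < δ)
    (hδ1 : δ < 1) : 1 + log (n / δ) ≤ log (10 * n * log (2 * n / δ) / (σ * δ)) := by
  have hL : log 2 ≤ log (2 * n / δ) :=
    log_le_log two_pos (by rw [le_div_iff₀ hδ0]; nlinarith)
  have hLpos : 0 < log (2 * n / δ) := (log_pos one_lt_two).trans_le hL
  have h10L : exp 1 ≤ 10 * log (2 * n / δ) / σ := by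
    rw [le_div_iff₀ hσ0]
    nlinarith [exp_one_lt_d9, log_two_gt_d9]
  calc 1 + log (n / δ) ≤ log (10 * log (2 * n / δ) / σ) + log (n / δ) := by
        gcongr
        rwa [le_log_iff_exp_le (by positivity)]
    _ = log (10 * n * log (2 * n / δ) / (σ * δ)) := by
        rw [← log_mul (by positivity) (by positivity)]
        congr 1
        field_simp

lemma lt_interval_count_bound {n w σ δ x : ℝ} (hn : 1 ≤ n) (hw : 0 ≤ w) (hσ0 : 0 < σ)
    (hσ1 : σ ≤ 1) (hδ0 : 0 < δ) (hδ1 : δ < 1) (hxn : x ≤ n)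
    (hxK : x < nearCountThreshold n w σ δ + 1) :
    x < n * w / σ * log (2 * n / δ) + 10 * √(n * w / σ * log (2 * n / δ) * log (1 / δ))
      + 10 * log (10 * n * log (2 * n / δ) / (σ * δ)) := by
  -- If `log (2n/δ) ≥ log 16 > 11/4`, the first term absorbs the mean part of `K`;
  -- otherwise `n < 8` and the last term alone exceeds `10`.
  unfold nearCountThreshold at hxK
  have hthird := one_add_log_div_le hn hσ0 hσ1 hδ0 hδ1
  have hL' : 0 ≤ log (n / δ) := log_nonneg (by rw [le_div_iff₀ hδ0]; linarith)
  have hM : 0 ≤ n * w / σ := by positivity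
  have hsqrt := sqrt_nonneg (n * w / σ * log (2 * n / δ) * log (1 / δ))
  by_cases hL : log 16 ≤ log (2 * n / δ)
  · have h16 : (11 / 4 : ℝ) ≤ log 16 := by
      rw [show (16 : ℝ) = 2 ^ 4 by norm_num, log_pow]
      linarith [log_two_gt_d9]
    have : 11 / 8 * (n * (2 * w / σ)) ≤ n * w / σ * log (2 * n / δ) := by
      rw [show 11 / 8 * (n * (2 * w / σ)) = n * w / σ * (11 / 4) by ring]
      gcongr
      linarith
    linarith
  · have hsmall : 2 * n / δ < 16 :=
      (log_lt_log_iff (by positivity) (by norm_num)).1 (not_le.1 hL)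
    have : n < 8 := by
      rw [div_lt_iff₀ hδ0] at hsmall
      nlinarith
    have : 0 ≤ n * w / σ * log (2 * n / δ) :=
      mul_nonneg hM (log_nonneg (by rw [le_div_iff₀ hδ0]; linarith))
    linarith

/-- uniform interval-counting bound for adaptive smooth points.  Let
`(d_{i,j})_{i∈[T],j∈[ℓ]}` be points of `[0,1]` generated by a `Tℓ`-step adaptive sequence of
`σ`-smooth distributions.  Then with probability at least `1 − δ`, every interval of width at
most `w` contains fewer than
`(Tℓw/σ)·ln(2Tℓ/δ) + 10·√((Tℓw/σ)·ln(2Tℓ/δ)·ln(1/δ)) + 10·log(10·Tℓ·log(2Tℓ/δ)/(σδ))`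
of the points. -/
theorem adaptive_smooth_interval_count
    (σ : ℝ) (hσ0 : 0 < σ) (hσ1 : σ ≤ 1) (T ℓ : ℕ) (hT : 0 < T) (hℓ : 0 < ℓ)
    (w : ℝ) (hw : 0 < w) (δ : ℝ) (hδ0 : 0 < δ) (hδ1 : δ < 1)
    (D : (s : ℕ) → Kernel (Fin s → ℝ) ℝ) (hD : ∀ s, IsMarkovKernel (D s))
    (hsmooth : ∀ (s : ℕ) (h : Fin s → ℝ) (A : Set ℝ), MeasurableSet A →
      (D s) h A ≤ ENNReal.ofReal (1 / σ) * volume (A ∩ Set.Icc (0 : ℝ) 1)) :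
    ENNReal.ofReal (1 - δ)
      ≤ adaptLaw D (T * ℓ) {traj | ∀ a b : ℝ, a ≤ b → b - a ≤ w →
          (((Finset.univ : Finset (Fin T × Fin ℓ)).filter
              (fun ij => traj (finProdFinEquiv ij) ∈ Set.Icc a b)).card : ℝ)
            < (T * ℓ * w / σ) * Real.log (2 * T * ℓ / δ)
              + 10 * Real.sqrt ((T * ℓ * w / σ) * Real.log (2 * T * ℓ / δ) * Real.log (1 / δ))
              + 10 * Real.log (10 * T * ℓ * Real.log (2 * T * ℓ / δ) / (σ * δ))} := by
  have := hD
  have hN : 0 < T * ℓ := Nat.mul_pos hT hℓ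
  have hN' : (1 : ℝ) ≤ (T * ℓ : ℕ) := by exact_mod_cast hN
  set K := nearCountThreshold (T * ℓ : ℕ) w σ δ
  set bad := ⋃ m : Fin (T * ℓ), {h : Fin (T * ℓ) → ℝ | K ≤ hitCount (nearCoord w m) h}
  have hbad_meas : MeasurableSet bad := MeasurableSet.iUnion fun m =>
    measurableSet_le measurable_const
      (measurable_from_nat.comp (measurable_hitCount (measurableSet_nearCoord m) _))
  refine le_trans ?_ (measure_mono (s := badᶜ) fun h hh a b _ hba => ?_)
  · calc ENNReal.ofReal (1 - δ) = 1 - ENNReal.ofReal δ := by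
          rw [ENNReal.ofReal_sub _ hδ0.le, ENNReal.ofReal_one]
      _ ≤ 1 - adaptLaw D (T * ℓ) bad := by
          gcongr
          exact adaptLaw_iUnion_nearCountThreshold_le hσ0 hw.le hδ0 hsmooth hN
      _ = adaptLaw D (T * ℓ) badᶜ := (prob_compl_eq_one_sub hbad_meas).symm
  simp only [bad, Set.mem_compl_iff, Set.mem_iUnion, not_exists] at hh
  have hcard := card_filter_mem_Icc_le h hba (K := ⌈K⌉₊) fun m => Nat.lt_ceil.2 (not_le.1 (hh m))
  rw [card_equiv finProdFinEquiv (t := univ.filter fun s => h s ∈ Set.Icc a b) (by simp)]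
  convert lt_interval_count_bound hN' hw.le hσ0 hσ1 hδ0 hδ1
    (by exact_mod_cast (card_filter_le _ _).trans (card_univ.trans (Fintype.card_fin _)).le)
    ((Nat.cast_le.2 hcard).trans_lt (Nat.ceil_lt_add_one
      (nearCountThreshold_nonneg hN' hw.le hσ0.le hδ0 hδ1))) using 3 <;> push_cast <;> ring_nf
end

section
/- Let n, T ∈ ℕ, let U be the uniform (normalized Lebesgue) probability measure on the closed unit Euclidean ball of ℝⁿ, and let u ∈ ℝⁿ be a nonzero vector. Then U( { x : ‖x‖₂ ≤ 1 and |⟨x, u⟩| ≤ ‖u‖₂ / (n²T²) } ) ≥ 1/(20·n²·T²). In particular, the uniform distribution on the slab { x : ‖x‖₂ ≤ 1, |⟨x, u⟩| ≤ ‖u‖₂·n^{-2}T^{-2} } is (1/(20n²T²))-smooth with respect to U. -/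
open MeasureTheory
open scoped ENNReal

/-- The slab of the unit ball consisting of points nearly orthogonal to `u`:
`{x : ‖x‖₂ ≤ 1, |⟨x,u⟫| ≤ ‖u‖₂/(n²T²)}`. -/
def slab (n T : ℕ) (u : Fin n → ℝ) : Set (Fin n → ℝ) :=
  {x | ∑ i, x i ^ 2 ≤ 1 ∧
    |∑ i, x i * u i| ≤ Real.sqrt (∑ i, u i ^ 2) / ((n : ℝ) ^ 2 * (T : ℝ) ^ 2)}

/-!
Rotate `u` onto the first coordinate axis; rotations preserve both the ball and Lebesgue measure,
so the slab has the volume of `{x ∈ B | |x₀| ≤ ε}` with `ε = 1/(n²T²)`. That set contains the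
cylinder `[-ε, ε] × B_{n-1}(1 - ε)`, while the ball lies in `[-1, 1] × B_{n-1}(1)`, so its uniform
measure is at least `ε (1 - ε)^(n-1) ≥ ε/2` by Bernoulli's inequality, as `(n - 1) ε ≤ 1/2`.
Conditioning `U` on a set of measure at least `c` multiplies probabilities by at most `1/c`.
-/

open ProbabilityTheory
open scoped RealInnerProductSpace

theorem cond_apply_le_div {Ω : Type*} [MeasurableSpace Ω] {μ : Measure Ω} {s : Set Ω} {c : ℝ≥0∞}
    (hc : c ≤ μ s) (A : Set Ω) : μ[|s] A ≤ μ A / c := by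
  rw [ENNReal.div_eq_inv_mul]
  exact mul_le_mul' (ENNReal.inv_le_inv.mpr hc) (Measure.restrict_apply_le s A)

section EuclideanSpace

variable {ι : Type*} [Fintype ι]

theorem norm_toLp_le_iff {x : ι → ℝ} {r : ℝ} (hr : 0 ≤ r) :
    ‖WithLp.toLp 2 x‖ ≤ r ↔ ∑ i, x i ^ 2 ≤ r ^ 2 := by
  rw [← mem_closedBall_zero_iff, EuclideanSpace.closedBall_zero_eq r hr]
  rfl

theorem volume_preimage_toLp (s : Set (EuclideanSpace ℝ ι)) :
    volume (WithLp.toLp 2 ⁻¹' s) = volume s :=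
  (EuclideanSpace.volume_preserving_symm_measurableEquiv_toLp ι).symm.measure_preimage_equiv s

theorem volume_setOf_sum_sq_le (r : ℝ) (hr : 0 ≤ r) :
    volume {y : ι → ℝ | ∑ i, y i ^ 2 ≤ r ^ 2}
      = ENNReal.ofReal (r ^ Fintype.card ι)
        * volume (Metric.closedBall (0 : EuclideanSpace ℝ ι) 1) := by
  have hball : {y : ι → ℝ | ∑ i, y i ^ 2 ≤ r ^ 2}
      = WithLp.toLp 2 ⁻¹' Metric.closedBall (0 : EuclideanSpace ℝ ι) r := by
    ext y
    simp [norm_toLp_le_iff hr]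
  rw [hball, volume_preimage_toLp, Measure.addHaar_closedBall' _ _ hr,
    finrank_euclideanSpace]

theorem volume_closedBall_inter_abs_inner_le_eq {v : EuclideanSpace ℝ ι} (hv : v ≠ 0) (i : ι)
    (r t : ℝ) :
    volume (Metric.closedBall 0 r ∩ {x | |⟪v, x⟫| ≤ ‖v‖ * t})
      = volume (Metric.closedBall 0 r ∩ {x : EuclideanSpace ℝ ι | |x i| ≤ t}) := by
  have hunit : Orthonormal ℝ (({i} : Set ι).domRestrict fun _ ↦ ‖v‖⁻¹ • v) :=
    orthonormal_subsingleton_iff.mpr fun _ ↦ norm_smul_inv_norm hv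
  obtain ⟨b, hb⟩ := hunit.exists_orthonormalBasis_extension_of_card_eq (by simp)
  have hpre : Metric.closedBall 0 r ∩ {x | |⟪v, x⟫| ≤ ‖v‖ * t}
      = b.repr ⁻¹' (Metric.closedBall 0 r ∩ {y | |y i| ≤ t}) := by
    ext x
    simp only [Set.mem_inter_iff, Set.mem_preimage, mem_closedBall_zero_iff,
      LinearIsometryEquiv.norm_map, Set.mem_ofPred_eq, b.repr_apply_apply, hb i rfl,
      real_inner_smul_left, abs_mul, abs_inv, abs_norm,
      inv_mul_le_iff₀ (norm_pos_iff.mpr hv)]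
  have hmeas : MeasurableSet (Metric.closedBall 0 r ∩ {y : EuclideanSpace ℝ ι | |y i| ≤ t}) :=
    measurableSet_closedBall.inter (measurableSet_le (by fun_prop) measurable_const)
  rw [hpre, b.measurePreserving_repr.measure_preimage hmeas.nullMeasurableSet]

theorem volume_unitBall_abs_sum_mul_le_eq {v : ι → ℝ} (hv : v ≠ 0) (i : ι) (t : ℝ) :
    volume {x : ι → ℝ | ∑ j, x j ^ 2 ≤ 1 ∧ |∑ j, x j * v j| ≤ √(∑ j, v j ^ 2) * t}
      = volume {x : ι → ℝ | ∑ j, x j ^ 2 ≤ 1 ∧ |x i| ≤ t} := by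
  have hnorm : ‖WithLp.toLp 2 v‖ = √(∑ j, v j ^ 2) := by simp [EuclideanSpace.norm_eq]
  have hrot :=
    volume_closedBall_inter_abs_inner_le_eq (v := WithLp.toLp 2 v) (by simpa using hv) i 1 t
  rw [← volume_preimage_toLp, ← volume_preimage_toLp (Metric.closedBall 0 1 ∩ _)] at hrot
  convert hrot using 2 <;> ext x <;>
    simp [norm_toLp_le_iff, hnorm, PiLp.inner_apply, mul_comm]

end EuclideanSpace

def cylinderSet (m : ℕ) (a r : ℝ) : Set (Fin (m + 1) → ℝ) :=
  {x | |x 0| ≤ a ∧ ∑ j : Fin m, x j.succ ^ 2 ≤ r ^ 2}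

theorem volume_cylinderSet (m : ℕ) (a : ℝ) {r : ℝ} (hr : 0 ≤ r) :
    volume (cylinderSet m a r) = ENNReal.ofReal (2 * a * r ^ m)
      * volume (Metric.closedBall (0 : EuclideanSpace ℝ (Fin m)) 1) := by
  have hprod : cylinderSet m a r = MeasurableEquiv.piFinSuccAbove (fun _ ↦ ℝ) 0 ⁻¹'
      (Metric.closedBall 0 a ×ˢ {y : Fin m → ℝ | ∑ j, y j ^ 2 ≤ r ^ 2}) := by
    ext x
    simp [cylinderSet, MeasurableEquiv.piFinSuccAbove_apply, Fin.tail]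
  rw [hprod, (volume_preserving_piFinSuccAbove (fun _ ↦ ℝ) 0).measure_preimage_equiv,
    Measure.volume_eq_prod, Measure.prod_prod, Real.volume_closedBall,
    volume_setOf_sum_sq_le r hr, Fintype.card_fin, ← mul_assoc,
    ← ENNReal.ofReal_mul' (by positivity)]

theorem ballSet_subset_cylinderSet (m : ℕ) : ballSet (m + 1) ⊆ cylinderSet m 1 1 := by
  intro x hx
  simp only [ballSet, Set.mem_ofPred_eq, Fin.sum_univ_succ] at hx
  have htail : 0 ≤ ∑ j : Fin m, x j.succ ^ 2 := by positivity
  refine ⟨(sq_le_one_iff_abs_le_one _).mp ?_, ?_⟩ <;> nlinarith [sq_nonneg (x 0)]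

theorem cylinderSet_subset_unitBall_abs_apply_le {m : ℕ} {ε : ℝ} (hε₀ : 0 ≤ ε) (hε₁ : ε ≤ 1) :
    cylinderSet m ε (1 - ε) ⊆ {x | ∑ i, x i ^ 2 ≤ 1 ∧ |x 0| ≤ ε} := by
  rintro x ⟨hx0, htail⟩
  refine ⟨?_, hx0⟩
  rw [Fin.sum_univ_succ]
  nlinarith [sq_abs (x 0), abs_nonneg (x 0)]

theorem unifBall_apply_of_subset {n : ℕ} {s : Set (Fin n → ℝ)} (hs : s ⊆ ballSet n) :
    unifBall n s = (volume (ballSet n))⁻¹ * volume s := by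
  have hball : MeasurableSet (ballSet n) := measurableSet_le (by fun_prop) measurable_const
  rw [unifBall, Measure.smul_apply, smul_eq_mul, Measure.restrict_apply' hball,
    Set.inter_eq_left.mpr hs]

theorem ofReal_mul_one_sub_pow_le_unifBall (m : ℕ) {ε : ℝ} (hε₀ : 0 ≤ ε) (hε₁ : ε ≤ 1) :
    ENNReal.ofReal (ε * (1 - ε) ^ m)
      ≤ unifBall (m + 1) {x | ∑ i, x i ^ 2 ≤ 1 ∧ |x 0| ≤ ε} := by
  set V := volume (Metric.closedBall (0 : EuclideanSpace ℝ (Fin m)) 1)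
  have hV₀ : V ≠ 0 := (Metric.measure_closedBall_pos volume _ one_pos).ne'
  have hV : V ≠ ∞ := measure_closedBall_lt_top.ne
  rw [unifBall_apply_of_subset fun x hx ↦ hx.1, ← ENNReal.div_eq_inv_mul]
  calc ENNReal.ofReal (ε * (1 - ε) ^ m)
      = volume (cylinderSet m ε (1 - ε)) / volume (cylinderSet m 1 1) := by
        rw [volume_cylinderSet m ε (by linarith), volume_cylinderSet m 1 zero_le_one,
          ENNReal.mul_div_mul_right _ _ hV₀ hV, ← ENNReal.ofReal_div_of_pos (by norm_num)]
        congr 1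
        ring
    _ ≤ _ := ENNReal.div_le_div
        (measure_mono (cylinderSet_subset_unitBall_abs_apply_le hε₀ hε₁))
        (measure_mono (ballSet_subset_cylinderSet m))

theorem one_div_two_mul_le_mul_one_sub_pow {m : ℕ} {d : ℝ} (hd : 1 ≤ d) (hmd : 2 * m ≤ d) :
    1 / (2 * d) ≤ 1 / d * (1 - 1 / d) ^ m := by
  have hd₀ : 0 < d := by linarith
  have hbernoulli : 1 - m / d ≤ (1 - 1 / d) ^ m := by
    have h := one_add_mul_le_pow (a := -(1 / d)) (by linarith [div_le_one_of_le₀ hd hd₀.le]) m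
    rwa [mul_neg, mul_one_div, ← sub_eq_add_neg, ← sub_eq_add_neg] at h
  have hmd' : m / d ≤ 1 / 2 := by rw [div_le_iff₀ hd₀]; linarith
  calc 1 / (2 * d) = 1 / d * (1 - 1 / 2) := by field_simp; norm_num
    _ ≤ 1 / d * (1 - m / d) := by gcongr
    _ ≤ 1 / d * (1 - 1 / d) ^ m := by gcongr

/-- the near-orthogonal slab has non-negligible uniform measure.  For any
nonzero `u`, the slab `{x : ‖x‖₂ ≤ 1, |⟨x,u⟩| ≤ ‖u‖₂/(n²T²)}` has uniform measure at least
`1/(20n²T²)`; in particular, the uniform distribution on the slab is `1/(20n²T²)`-smooth. -/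
theorem slab_measure_lower_bound
    (n T : ℕ) (hn : 0 < n) (hT : 0 < T) (u : Fin n → ℝ) (hu : u ≠ 0) :
    ENNReal.ofReal (1 / (20 * (n : ℝ) ^ 2 * (T : ℝ) ^ 2)) ≤ unifBall n (slab n T u) ∧
    ∀ A : Set (Fin n → ℝ), MeasurableSet A →
      ((unifBall n (slab n T u))⁻¹ • (unifBall n).restrict (slab n T u)) A
        ≤ unifBall n A / ENNReal.ofReal (1 / (20 * (n : ℝ) ^ 2 * (T : ℝ) ^ 2)) := by
  obtain ⟨m, rfl⟩ := Nat.exists_eq_add_one_of_ne_zero hn.ne'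
  set d : ℝ := ((m + 1 : ℕ) : ℝ) ^ 2 * (T : ℝ) ^ 2
  have hT₁ : (1 : ℝ) ≤ (T : ℝ) ^ 2 := one_le_pow₀ (by exact_mod_cast hT)
  have hd : 1 ≤ d := one_le_mul_of_one_le_of_one_le
    (one_le_pow₀ (by exact_mod_cast Nat.le_add_left 1 m)) hT₁
  have hmd : 2 * (m : ℝ) ≤ d :=
    calc 2 * (m : ℝ) ≤ ((m + 1 : ℕ) : ℝ) ^ 2 := by push_cast; nlinarith
      _ ≤ d := le_mul_of_one_le_right (by positivity) hT₁
  have hbound : ENNReal.ofReal (1 / (20 * ((m + 1 : ℕ) : ℝ) ^ 2 * (T : ℝ) ^ 2))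
      ≤ unifBall (m + 1) (slab (m + 1) T u) :=
    calc _ ≤ ENNReal.ofReal (1 / (2 * d)) := ENNReal.ofReal_le_ofReal <| by
          rw [mul_assoc]
          exact one_div_le_one_div_of_le (by positivity) (by linarith)
      _ ≤ ENNReal.ofReal (1 / d * (1 - 1 / d) ^ m) :=
          ENNReal.ofReal_le_ofReal (one_div_two_mul_le_mul_one_sub_pow hd hmd)
      _ ≤ unifBall (m + 1) {x | ∑ i, x i ^ 2 ≤ 1 ∧ |x 0| ≤ 1 / d} :=
          ofReal_mul_one_sub_pow_le_unifBall m (by positivity)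
            (div_le_one_of_le₀ hd (by positivity))
      _ = unifBall (m + 1) (slab (m + 1) T u) := by
          rw [unifBall_apply_of_subset fun x hx ↦ hx.1, unifBall_apply_of_subset fun x hx ↦ hx.1,
            slab, ← volume_unitBall_abs_sum_mul_le_eq hu 0, mul_one_div]
  exact ⟨hbound, fun A _ ↦ cond_apply_le_div hbound A⟩
end
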